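/- arXiv:2307.08010 — 2 statements merged into one kernel-verified Lean document; each statement's English description precedes it below -/
import Mathlib

section
/- Let k, m ∈ ℕ \ {0}, σ = k/m, and define w_{k,m}(x,ξ) = (1 + |x|^{2k} + |ξ|^{2m})^{1/2} for (x,ξ) ∈ ℝ^d × ℝ^d. Then for every n ∈ ℝ, the function w_{k,m}^n belongs to G^{nk, σ}. -/
noncomputable section

open Real Filter MeasureTheory Set
open scoped BigOperators Topology

abbrev Rd (d : ℕ) := EuclideanSpace ℝ (Fin d)

/-- Iterated directional derivative along a list of directions. -/
def iterDeriv {E F : Type*} [NormedAddCommGroup E] [NormedSpace ℝ E]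
    [NormedAddCommGroup F] [NormedSpace ℝ F] : List E → (E → F) → E → F
  | [], a => a
  | v :: l, a => fun p => fderiv ℝ (iterDeriv l a) p v

/-- Directions in the `x` variables according to multi-index `α`. -/
def xDirs {d : ℕ} (α : Fin d → ℕ) : List (Rd d × Rd d) :=
  ((List.finRange d).map fun j =>
    List.replicate (α j) ((EuclideanSpace.single j (1:ℝ), (0 : Rd d)))).flatten

/-- Directions in the `ξ` variables according to multi-index `β`. -/
def xiDirs {d : ℕ} (β : Fin d → ℕ) : List (Rd d × Rd d) :=
  ((List.finRange d).map fun j =>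
    List.replicate (β j) (((0 : Rd d), EuclideanSpace.single j (1:ℝ)))).flatten

/-- The anisotropic weight `θ_σ(x,ξ) = 1 + |x| + |ξ|^(1/σ)`. -/
def theta (σ : ℝ) {d : ℕ} (p : Rd d × Rd d) : ℝ := 1 + ‖p.1‖ + ‖p.2‖ ^ (1/σ)

/-- The anisotropic Shubin symbol class `G^{m,σ}`:
`a` is smooth and `|∂_x^α ∂_ξ^β a(x,ξ)| ≤ C_{α,β} θ_σ(x,ξ)^(m - |α| - σ|β|)`. -/
def IsShubin {d : ℕ} (σ m : ℝ) (a : Rd d × Rd d → ℂ) : Prop :=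
  ContDiff ℝ (⊤ : ℕ∞) a ∧
  ∀ α β : Fin d → ℕ, ∃ C > 0, ∀ x ξ : Rd d,
    ‖iterDeriv (xDirs α ++ xiDirs β) a (x, ξ)‖ ≤
      C * theta σ (x, ξ) ^ (m - (∑ j, (α j : ℝ)) - σ * (∑ j, (β j : ℝ)))

/-
Put `u = w_{k,m}^2 = 1 + |x|^{2k} + |ξ|^{2m}`. Since `x_j ∈ G^{1,σ}` and `ξ_j ∈ G^{σ,σ}` and the
classes are closed under sums and satisfy `G^{r,σ} · G^{s,σ} ⊆ G^{r+s,σ}`, the polynomial `u` lies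
in `G^{2k,σ}`; moreover `u ≍ θ_σ^{2k}` because `|ξ|^{2m} = (|ξ|^{1/σ})^{2k}`. Then `u^t ∈ G^{2kt,σ}`
for every real `t`, by induction on the number of derivatives: `∂_v (u^t) = t u^{t-1} ∂_v u`, where
`u^{t-1}` is controlled by the induction hypothesis and `∂_v u` by `u ∈ G^{2k,σ}`. Take `t = n/2`.
-/

open Asymptotics
open scoped ContDiff

section IterDeriv

variable {E F G : Type*} [NormedAddCommGroup E] [NormedSpace ℝ E]
  [NormedAddCommGroup F] [NormedSpace ℝ F] [NormedAddCommGroup G] [NormedSpace ℝ G]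

@[simp]
theorem iterDeriv_nil (f : E → F) : iterDeriv [] f = f := rfl

theorem iterDeriv_append_singleton (l : List E) (v : E) (f : E → F) :
    iterDeriv (l ++ [v]) f = iterDeriv l (fun p => fderiv ℝ f p v) := by
  induction l with
  | nil => rfl
  | cons u l ih => simp only [List.cons_append, iterDeriv, ih]

theorem ContDiff.iterDeriv {f : E → F} (hf : ContDiff ℝ ∞ f) (l : List E) :
    ContDiff ℝ ∞ (iterDeriv l f) := by
  induction l with
  | nil => exact hf
  | cons v l ih => exact (ih.fderiv_right le_rfl).clm_apply contDiff_const

theorem ContinuousLinearMap.iterDeriv_comp (g : F →L[ℝ] G) {f : E → F} (hf : ContDiff ℝ ∞ f)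
    (l : List E) : iterDeriv l (fun p => g (f p)) = fun p => g (iterDeriv l f p) := by
  induction l with
  | nil => rfl
  | cons v l ih =>
    ext p
    have hd := (hf.iterDeriv l).differentiable (by simp) p
    simp only [iterDeriv, ih]
    exact congrArg (· v) (g.hasFDerivAt.comp p hd.hasFDerivAt).fderiv

theorem iterDeriv_ofReal {f : E → ℝ} (hf : ContDiff ℝ ∞ f) (l : List E) :
    iterDeriv l (fun p => (f p : ℂ)) = fun p => ((iterDeriv l f p : ℝ) : ℂ) :=
  Complex.ofRealCLM.iterDeriv_comp hf l

end IterDeriv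

theorem isBigO_mul_rpow {α : Type*} {l : Filter α} {θ f g : α → ℝ} {r s : ℝ} (hθ : ∀ p, 0 < θ p)
    (hf : f =O[l] fun p => θ p ^ r) (hg : g =O[l] fun p => θ p ^ s) :
    (fun p => f p * g p) =O[l] fun p => θ p ^ (r + s) := by
  simpa only [Real.rpow_add (hθ _)] using hf.mul hg

section SymbolBounds

variable {E : Type*} [NormedAddCommGroup E] [NormedSpace ℝ E]
  {θ : E → ℝ} {D : Set E} {w : E → ℝ} {N : ℕ} {r s : ℝ} {f g : E → ℝ}

def HasSymbolBounds (θ : E → ℝ) (D : Set E) (w : E → ℝ) (N : ℕ) (r : ℝ) (f : E → ℝ) : Prop :=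
  ContDiff ℝ ∞ f ∧ ∀ L : List E, (∀ v ∈ L, v ∈ D) → L.length ≤ N →
    iterDeriv L f =O[⊤] fun p => θ p ^ (r - (L.map w).sum)

theorem HasSymbolBounds.of_le (h : HasSymbolBounds θ D w N r f) {M : ℕ} (hMN : M ≤ N) :
    HasSymbolBounds θ D w M r f :=
  ⟨h.1, fun L hL hlen => h.2 L hL (hlen.trans hMN)⟩

theorem HasSymbolBounds.isBigO (h : HasSymbolBounds θ D w N r f) :
    f =O[⊤] fun p => θ p ^ r := by
  simpa only [iterDeriv_nil, List.map_nil, List.sum_nil, sub_zero] using h.2 [] (by simp) N.zero_le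

theorem hasSymbolBounds_zero_iff :
    HasSymbolBounds θ D w 0 r f ↔ ContDiff ℝ ∞ f ∧ f =O[⊤] fun p => θ p ^ r := by
  refine ⟨fun h => ⟨h.1, h.isBigO⟩, fun ⟨hf, hO⟩ => ⟨hf, fun L _ hlen => ?_⟩⟩
  rw [List.length_eq_zero_iff.1 (Nat.le_zero.1 hlen)]
  simpa only [iterDeriv_nil, List.map_nil, List.sum_nil, sub_zero] using hO

theorem hasSymbolBounds_succ_iff :
    HasSymbolBounds θ D w (N + 1) r f ↔ ContDiff ℝ ∞ f ∧ (f =O[⊤] fun p => θ p ^ r) ∧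
      ∀ v ∈ D, HasSymbolBounds θ D w N (r - w v) (fun p => fderiv ℝ f p v) := by
  constructor
  · intro h
    refine ⟨h.1, h.isBigO, fun v hv => ⟨(h.1.fderiv_right le_rfl).clm_apply contDiff_const,
      fun L hL hlen => ?_⟩⟩
    have hO := h.2 (L ++ [v]) (by simpa [or_imp, forall_and] using ⟨hL, hv⟩) (by simpa using hlen)
    rw [iterDeriv_append_singleton] at hO
    convert hO using 3
    simp only [List.map_append, List.sum_append, List.map_singleton, List.sum_singleton]
    ring
  · rintro ⟨hf, hO, hD⟩
    refine ⟨hf, fun L hL hlen => ?_⟩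
    obtain rfl | ⟨l, v, rfl⟩ := L.eq_nil_or_concat'
    · simpa only [iterDeriv_nil, List.map_nil, List.sum_nil, sub_zero] using hO
    · have hl := (hD v (hL v (by simp))).2 l (fun u hu => hL u (by simp [hu]))
        (by simpa using hlen)
      rw [iterDeriv_append_singleton]
      convert hl using 3
      simp only [List.map_append, List.sum_append, List.map_singleton, List.sum_singleton]
      ring

theorem hasSymbolBounds_zero_fun (N : ℕ) (r : ℝ) : HasSymbolBounds θ D w N r fun _ => 0 := by
  induction N generalizing r with
  | zero => exact hasSymbolBounds_zero_iff.2 ⟨contDiff_const, isBigO_zero _ _⟩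
  | succ N ih =>
    exact hasSymbolBounds_succ_iff.2
      ⟨contDiff_const, isBigO_zero _ _, fun v _ => by simpa using ih _⟩

theorem hasSymbolBounds_const (c : ℝ) (N : ℕ) : HasSymbolBounds θ D w N 0 fun _ => c := by
  have hO : (fun _ => c) =O[⊤] fun p => θ p ^ (0 : ℝ) := by
    simpa using isBigO_const_const c (one_ne_zero : (1 : ℝ) ≠ 0) ⊤
  cases N with
  | zero => exact hasSymbolBounds_zero_iff.2 ⟨contDiff_const, hO⟩
  | succ N =>
    exact hasSymbolBounds_succ_iff.2
      ⟨contDiff_const, hO, fun v _ => by simpa using hasSymbolBounds_zero_fun N _⟩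

theorem HasSymbolBounds.mono (hθ : ∀ p, 1 ≤ θ p) (h : HasSymbolBounds θ D w N r f) (hrs : r ≤ s) :
    HasSymbolBounds θ D w N s f := by
  refine ⟨h.1, fun L hL hlen => (h.2 L hL hlen).trans (IsBigO.of_bound 1 ?_)⟩
  refine Filter.Eventually.of_forall fun p => ?_
  have hθ0 : 0 ≤ θ p := zero_le_one.trans (hθ p)
  rw [one_mul, Real.norm_of_nonneg (Real.rpow_nonneg hθ0 _),
    Real.norm_of_nonneg (Real.rpow_nonneg hθ0 _)]
  exact Real.rpow_le_rpow_of_exponent_le (hθ p) (by linarith)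

theorem HasSymbolBounds.add (hf : HasSymbolBounds θ D w N r f) (hg : HasSymbolBounds θ D w N r g) :
    HasSymbolBounds θ D w N r fun p => f p + g p := by
  induction N generalizing r f g with
  | zero => exact hasSymbolBounds_zero_iff.2 ⟨hf.1.add hg.1, hf.isBigO.add hg.isBigO⟩
  | succ N ih =>
    refine hasSymbolBounds_succ_iff.2 ⟨hf.1.add hg.1, hf.isBigO.add hg.isBigO, fun v hv => ?_⟩
    have hderiv : (fun p => fderiv ℝ (fun q => f q + g q) p v) =
        fun p => fderiv ℝ f p v + fderiv ℝ g p v := by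
      ext p
      rw [fderiv_fun_add (hf.1.differentiable (by simp) p) (hg.1.differentiable (by simp) p)]
      rfl
    rw [hderiv]
    exact ih ((hasSymbolBounds_succ_iff.1 hf).2.2 v hv) ((hasSymbolBounds_succ_iff.1 hg).2.2 v hv)

theorem hasSymbolBounds_sum {ι : Type*} (t : Finset ι) {f : ι → E → ℝ}
    (h : ∀ i ∈ t, HasSymbolBounds θ D w N r (f i)) :
    HasSymbolBounds θ D w N r fun p => ∑ i ∈ t, f i p := by
  classical
  induction t using Finset.induction_on with
  | empty => simpa using hasSymbolBounds_zero_fun N r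
  | insert i t hi ih =>
    simp only [Finset.sum_insert hi]
    exact (h i (t.mem_insert_self i)).add (ih fun j hj => h j (Finset.mem_insert_of_mem hj))

theorem HasSymbolBounds.mul (hθ : ∀ p, 0 < θ p) (hf : HasSymbolBounds θ D w N r f)
    (hg : HasSymbolBounds θ D w N s g) : HasSymbolBounds θ D w N (r + s) fun p => f p * g p := by
  induction N generalizing r s f g with
  | zero =>
    exact hasSymbolBounds_zero_iff.2 ⟨hf.1.mul hg.1, isBigO_mul_rpow hθ hf.isBigO hg.isBigO⟩
  | succ N ih =>
    refine hasSymbolBounds_succ_iff.2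
      ⟨hf.1.mul hg.1, isBigO_mul_rpow hθ hf.isBigO hg.isBigO, fun v hv => ?_⟩
    have hderiv : (fun p => fderiv ℝ (fun q => f q * g q) p v) =
        fun p => fderiv ℝ f p v * g p + f p * fderiv ℝ g p v := by
      ext p
      rw [fderiv_fun_mul (hf.1.differentiable (by simp) p) (hg.1.differentiable (by simp) p)]
      simp only [add_apply, smul_apply, smul_eq_mul]
      ring
    have h₁ := ih ((hasSymbolBounds_succ_iff.1 hf).2.2 v hv) (hg.of_le N.le_succ)
    have h₂ := ih (hf.of_le N.le_succ) ((hasSymbolBounds_succ_iff.1 hg).2.2 v hv)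
    rw [show r - w v + s = r + s - w v by ring] at h₁
    rw [show r + (s - w v) = r + s - w v by ring] at h₂
    rw [hderiv]
    exact h₁.add h₂

theorem HasSymbolBounds.pow (hθ : ∀ p, 0 < θ p) (hf : HasSymbolBounds θ D w N r f) (j : ℕ) :
    HasSymbolBounds θ D w N (j * r) fun p => f p ^ j := by
  induction j with
  | zero => simpa using hasSymbolBounds_const 1 N
  | succ j ih =>
    simp only [pow_succ, Nat.cast_succ, add_mul, one_mul]
    exact ih.mul hθ hf

theorem ContinuousLinearMap.hasSymbolBounds (hθ : ∀ p, 1 ≤ θ p) (ℓ : E →L[ℝ] ℝ)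
    (hO : ℓ =O[⊤] fun p => θ p ^ r) (hD : ∀ v ∈ D, ℓ v ≠ 0 → w v ≤ r) (N : ℕ) :
    HasSymbolBounds θ D w N r ℓ := by
  cases N with
  | zero => exact hasSymbolBounds_zero_iff.2 ⟨ℓ.contDiff, hO⟩
  | succ N =>
    refine hasSymbolBounds_succ_iff.2 ⟨ℓ.contDiff, hO, fun v hv => ?_⟩
    simp only [ℓ.fderiv]
    by_cases hℓv : ℓ v = 0
    · simpa [hℓv] using hasSymbolBounds_zero_fun N (r - w v)
    · exact (hasSymbolBounds_const (ℓ v) N).mono hθ (sub_nonneg.2 (hD v hv hℓv))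

theorem hasSymbolBounds_rpow (hθ : ∀ p, 0 < θ p) {u : E → ℝ} {ρ : ℝ} (hu_pos : ∀ p, 0 < u p)
    (hu : ∀ N, HasSymbolBounds θ D w N ρ u)
    (hO : ∀ t, (fun p => u p ^ t) =O[⊤] fun p => θ p ^ (ρ * t)) (N : ℕ) (t : ℝ) :
    HasSymbolBounds θ D w N (ρ * t) fun p => u p ^ t := by
  have hu_diff : Differentiable ℝ u := (hu 0).1.differentiable (by simp)
  have hsmooth (t : ℝ) : ContDiff ℝ ∞ fun p => u p ^ t :=
    (hu 0).1.rpow_const_of_ne fun p => (hu_pos p).ne'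
  induction N generalizing t with
  | zero => exact hasSymbolBounds_zero_iff.2 ⟨hsmooth t, hO t⟩
  | succ N ih =>
    refine hasSymbolBounds_succ_iff.2 ⟨hsmooth t, hO t, fun v hv => ?_⟩
    have hderiv : (fun p => fderiv ℝ (fun q => u q ^ t) p v) =
        fun p => t * u p ^ (t - 1) * fderiv ℝ u p v := by
      ext p
      rw [((hu_diff p).hasFDerivAt.rpow_const (Or.inl (hu_pos p).ne')).fderiv]
      simp only [smul_apply, smul_eq_mul]
    have hdu := (hasSymbolBounds_succ_iff.1 (hu (N + 1))).2.2 v hv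
    have h := ((hasSymbolBounds_const t N).mul hθ (ih (t - 1))).mul hθ hdu
    rw [show 0 + ρ * (t - 1) + (ρ - w v) = ρ * t - w v by ring] at h
    rw [hderiv]
    exact h

end SymbolBounds

theorem one_add_pow_add_pow_le {a b : ℝ} (ha : 0 ≤ a) (hb : 0 ≤ b) (n : ℕ) :
    1 + a ^ n + b ^ n ≤ 3 * (1 + a + b) ^ n := by
  have h₁ : 1 ≤ (1 + a + b) ^ n := one_le_pow₀ (by linarith)
  have h₂ : a ^ n ≤ (1 + a + b) ^ n := pow_le_pow_left₀ ha (by linarith) n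
  have h₃ : b ^ n ≤ (1 + a + b) ^ n := pow_le_pow_left₀ hb (by linarith) n
  linarith

theorem one_add_add_pow_le {a b : ℝ} (ha : 0 ≤ a) (hb : 0 ≤ b) (n : ℕ) :
    (1 + a + b) ^ n ≤ 3 ^ n * (1 + a ^ n + b ^ n) := by
  set M := max 1 (max a b)
  have hM : M ^ n ≤ 1 + a ^ n + b ^ n := by
    have := pow_nonneg ha n
    have := pow_nonneg hb n
    rcases max_choice 1 (max a b) with h | h <;> simp only [M, h]
    · rw [one_pow]
      linarith
    · rcases max_choice a b with h' | h' <;> rw [h'] <;> linarith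
  calc (1 + a + b) ^ n ≤ (3 * M) ^ n := by
        gcongr
        linarith [le_max_left 1 (max a b), le_max_left a b, le_max_right a b,
          le_max_right 1 (max a b)]
    _ = 3 ^ n * M ^ n := mul_pow _ _ _
    _ ≤ 3 ^ n * (1 + a ^ n + b ^ n) := by gcongr

section Anisotropic

variable {d : ℕ} {σ : ℝ}

def anisoDirs (d : ℕ) : Set (Rd d × Rd d) :=
  range (fun j => (EuclideanSpace.single j 1, 0)) ∪ range (fun j => (0, EuclideanSpace.single j 1))

/-- This is `1` on the `x`-directions and `σ` on the `ξ`-directions of `anisoDirs`, so that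
`HasSymbolBounds (theta σ) (anisoDirs d) (anisoOrder σ) N r` for all `N` is the estimate
defining `G^{r,σ}`. -/
def anisoOrder (σ : ℝ) (v : Rd d × Rd d) : ℝ := ‖v.1‖ + σ * ‖v.2‖

theorem one_le_theta (p : Rd d × Rd d) : 1 ≤ theta σ p := by
  have := Real.rpow_nonneg (norm_nonneg p.2) (1 / σ)
  unfold theta
  linarith [norm_nonneg p.1]

theorem theta_pos (p : Rd d × Rd d) : 0 < theta σ p := zero_lt_one.trans_le (one_le_theta p)

theorem norm_fst_le_theta (p : Rd d × Rd d) : ‖p.1‖ ≤ theta σ p := by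
  have := Real.rpow_nonneg (norm_nonneg p.2) (1 / σ)
  unfold theta
  linarith

theorem norm_snd_le_theta_rpow (hσ : 0 < σ) (p : Rd d × Rd d) : ‖p.2‖ ≤ theta σ p ^ σ := by
  have h : ‖p.2‖ ^ (1 / σ) ≤ theta σ p := by
    unfold theta
    linarith [norm_nonneg p.1]
  calc ‖p.2‖ = (‖p.2‖ ^ (1 / σ)) ^ σ := by
        rw [← Real.rpow_mul (norm_nonneg _), one_div_mul_cancel hσ.ne', Real.rpow_one]
    _ ≤ theta σ p ^ σ := Real.rpow_le_rpow (by positivity) h hσ.le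

theorem hasSymbolBounds_fst_apply (j : Fin d) (N : ℕ) :
    HasSymbolBounds (theta σ) (anisoDirs d) (anisoOrder σ) N 1 fun p => p.1 j := by
  refine ((EuclideanSpace.proj j).comp (ContinuousLinearMap.fst ℝ (Rd d) (Rd d))).hasSymbolBounds
    one_le_theta (IsBigO.of_bound 1 (Filter.Eventually.of_forall fun p => ?_)) ?_ N
  · rw [Real.rpow_one, Real.norm_of_nonneg (theta_pos p).le, one_mul]
    exact (PiLp.norm_apply_le p.1 j).trans (norm_fst_le_theta p)
  · rintro _ (⟨i, rfl⟩ | ⟨i, rfl⟩) hv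
    · simp [anisoOrder]
    · simp at hv

theorem hasSymbolBounds_snd_apply (hσ : 0 < σ) (j : Fin d) (N : ℕ) :
    HasSymbolBounds (theta σ) (anisoDirs d) (anisoOrder σ) N σ fun p => p.2 j := by
  refine ((EuclideanSpace.proj j).comp (ContinuousLinearMap.snd ℝ (Rd d) (Rd d))).hasSymbolBounds
    one_le_theta (IsBigO.of_bound 1 (Filter.Eventually.of_forall fun p => ?_)) ?_ N
  · rw [Real.norm_of_nonneg (Real.rpow_nonneg (theta_pos p).le _), one_mul]
    exact (PiLp.norm_apply_le p.2 j).trans (norm_snd_le_theta_rpow hσ p)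
  · rintro _ (⟨i, rfl⟩ | ⟨i, rfl⟩) hv
    · simp at hv
    · simp [anisoOrder]

theorem norm_sq_eq_sum_mul_self (x : Rd d) : ‖x‖ ^ 2 = ∑ j, x j * x j := by
  rw [EuclideanSpace.norm_sq_eq]
  simp [sq]

theorem hasSymbolBounds_norm_fst_sq (N : ℕ) :
    HasSymbolBounds (theta σ) (anisoDirs d) (anisoOrder σ) N 2 fun p => ‖p.1‖ ^ 2 := by
  simp only [norm_sq_eq_sum_mul_self]
  refine hasSymbolBounds_sum _ fun j _ => ?_
  simpa [one_add_one_eq_two] using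
    (hasSymbolBounds_fst_apply j N).mul theta_pos (hasSymbolBounds_fst_apply j N)

theorem hasSymbolBounds_norm_snd_sq (hσ : 0 < σ) (N : ℕ) :
    HasSymbolBounds (theta σ) (anisoDirs d) (anisoOrder σ) N (2 * σ) fun p => ‖p.2‖ ^ 2 := by
  simp only [norm_sq_eq_sum_mul_self]
  refine hasSymbolBounds_sum _ fun j _ => ?_
  simpa [two_mul] using
    (hasSymbolBounds_snd_apply hσ j N).mul theta_pos (hasSymbolBounds_snd_apply hσ j N)

end Anisotropic

section Weight

variable {d k m : ℕ}

def weightSq (k m : ℕ) (p : Rd d × Rd d) : ℝ := 1 + ‖p.1‖ ^ (2 * k) + ‖p.2‖ ^ (2 * m)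

theorem weightSq_pos (p : Rd d × Rd d) : 0 < weightSq k m p := by
  unfold weightSq
  positivity

theorem hasSymbolBounds_weightSq (hk : 0 < k) (hm : 0 < m) (N : ℕ) :
    HasSymbolBounds (theta (k / m : ℝ)) (anisoDirs d) (anisoOrder (k / m : ℝ)) N (2 * k)
      (weightSq k m) := by
  have hσ : (0 : ℝ) < k / m := by positivity
  have h₀ := (hasSymbolBounds_const (θ := theta (k / m : ℝ)) (D := anisoDirs d)
    (w := anisoOrder (k / m : ℝ)) 1 N).mono one_le_theta (by positivity : (0 : ℝ) ≤ 2 * k)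
  have hw : weightSq k m = fun p : Rd d × Rd d => 1 + (‖p.1‖ ^ 2) ^ k + (‖p.2‖ ^ 2) ^ m := by
    ext p
    simp only [weightSq, pow_mul]
  rw [hw]
  refine (h₀.add ?_).add ?_
  · convert (hasSymbolBounds_norm_fst_sq N).pow theta_pos k using 1
    ring
  · convert (hasSymbolBounds_norm_snd_sq hσ N).pow theta_pos m using 1
    field_simp

theorem weightSq_eq (hk : 0 < k) (p : Rd d × Rd d) :
    weightSq k m p = 1 + ‖p.1‖ ^ (2 * k) + (‖p.2‖ ^ (1 / (k / m : ℝ))) ^ (2 * k) := by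
  rw [← Real.rpow_natCast (_ ^ _), ← Real.rpow_mul (norm_nonneg _),
    show 1 / (k / m : ℝ) * (2 * k : ℕ) = (2 * m : ℕ) by push_cast; field_simp, Real.rpow_natCast]
  rfl

theorem weightSq_isTheta (hk : 0 < k) :
    weightSq k m =Θ[⊤] fun p : Rd d × Rd d => theta (k / m : ℝ) p ^ (2 * k) := by
  refine ⟨IsBigO.of_bound 3 (Filter.Eventually.of_forall fun p => ?_),
    IsBigO.of_bound (3 ^ (2 * k)) (Filter.Eventually.of_forall fun p => ?_)⟩ <;>
  rw [Real.norm_of_nonneg (weightSq_pos p).le, Real.norm_of_nonneg (pow_nonneg (theta_pos p).le _),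
    weightSq_eq hk]
  · exact one_add_pow_add_pow_le (norm_nonneg _) (Real.rpow_nonneg (norm_nonneg _) _) _
  · exact one_add_add_pow_le (norm_nonneg _) (Real.rpow_nonneg (norm_nonneg _) _) _

theorem isBigO_weightSq_rpow (hk : 0 < k) (t : ℝ) :
    (fun p : Rd d × Rd d => weightSq k m p ^ t) =O[⊤]
      fun p => theta (k / m : ℝ) p ^ (2 * k * t) := by
  refine ((weightSq_isTheta hk).rpow (Filter.Eventually.of_forall fun p => (weightSq_pos p).le)
    (Filter.Eventually.of_forall fun p => pow_nonneg (theta_pos p).le _)).isBigO.congr_right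
    fun p => ?_
  rw [← Real.rpow_natCast, ← Real.rpow_mul (theta_pos p).le]
  push_cast
  rfl

end Weight

section MultiIndex

variable {d : ℕ}

theorem mem_anisoDirs_of_mem_xDirs_append_xiDirs (α β : Fin d → ℕ) :
    ∀ v ∈ xDirs α ++ xiDirs β, v ∈ anisoDirs d := by
  intro v hv
  simp only [xDirs, xiDirs, List.mem_append, List.mem_flatten, List.mem_map] at hv
  rcases hv with ⟨_, ⟨j, -, rfl⟩, hv⟩ | ⟨_, ⟨j, -, rfl⟩, hv⟩ <;> rw [List.eq_of_mem_replicate hv]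
  · exact Or.inl ⟨j, rfl⟩
  · exact Or.inr ⟨j, rfl⟩

theorem sum_map_anisoOrder_xDirs_append_xiDirs (σ : ℝ) (α β : Fin d → ℕ) :
    ((xDirs α ++ xiDirs β).map (anisoOrder σ)).sum = ∑ j, (α j : ℝ) + σ * ∑ j, (β j : ℝ) := by
  simp only [xDirs, xiDirs, List.map_append, List.map_flatten, List.map_map, Function.comp_def,
    List.map_replicate, anisoOrder, PiLp.norm_single, norm_one, norm_zero, mul_zero, add_zero,
    mul_one, zero_add, List.sum_append, List.sum_flatten, List.sum_replicate, nsmul_eq_mul,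
    List.sum_map_mul_right, Fin.sum_univ_def, add_right_inj]
  exact mul_comm _ _

end MultiIndex

/-- For `k, m ∈ ℕ \ {0}`, `σ = k/m`, the weight
`w_{k,m}(x,ξ) = (1 + |x|^{2k} + |ξ|^{2m})^{1/2}` satisfies `w_{k,m}^n ∈ G^{nk,σ}`
for every `n ∈ ℝ`. -/
theorem statement2 {d : ℕ} (k m : ℕ) (hk : 0 < k) (hm : 0 < m) (n : ℝ) :
    IsShubin ((k : ℝ) / (m : ℝ)) (n * k)
      (fun p : Rd d × Rd d =>
        (((((1 + ‖p.1‖ ^ (2 * k) + ‖p.2‖ ^ (2 * m)) ^ ((1 : ℝ) / 2)) ^ n : ℝ)) : ℂ)) := by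
  have hsymb (N : ℕ) := hasSymbolBounds_rpow theta_pos weightSq_pos
    (hasSymbolBounds_weightSq (d := d) hk hm) (isBigO_weightSq_rpow hk) N (n / 2)
  have hfun (p : Rd d × Rd d) :
      ((1 + ‖p.1‖ ^ (2 * k) + ‖p.2‖ ^ (2 * m)) ^ ((1 : ℝ) / 2)) ^ n = weightSq k m p ^ (n / 2) :=
    (Real.rpow_mul (weightSq_pos p).le (1 / 2) n).symm.trans (by rw [one_div_mul_eq_div])
  simp only [hfun]
  refine ⟨Complex.ofRealCLM.contDiff.comp (hsymb 0).1, fun α β => ?_⟩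
  obtain ⟨C, hC, hbound⟩ := ((hsymb _).2 (xDirs α ++ xiDirs β)
    (mem_anisoDirs_of_mem_xDirs_append_xiDirs α β) le_rfl).exists_pos
  refine ⟨C, hC, fun x ξ => ?_⟩
  rw [iterDeriv_ofReal (hsymb 0).1, Complex.norm_real]
  convert isBigOWith_top.1 hbound (x, ξ) using 2
  rw [Real.norm_of_nonneg (Real.rpow_nonneg (theta_pos _).le _),
    sum_map_anisoOrder_xDirs_append_xiDirs]
  congr 1
  ring
end
end

section
/- Let a ∈ C^∞(ℝ^{2d} \ {0}) be real-valued with lim_{(x,ξ)→(0,0)} a(x,ξ) = 0, and suppose the Hamilton flow χ_t(x,ξ) of a is well defined for all t ∈ [−T,T] (for some T > 0) and all (x,ξ) ∈ T*ℝ^d \ {0}. If σ > 0 and χ_t(Λ_σ(λ)(x,ξ)) = Λ_σ(λ) χ_t(x,ξ) holds for all λ > 0, (x,ξ) ∈ T*ℝ^d \ {0}, and t ∈ [−T,T], then a satisfies the homogeneity a(λx, λ^σ ξ) = λ^{σ+1} a(x,ξ) for all (x,ξ) ∈ T*ℝ^d \ {0} and λ > 0. -/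
noncomputable section

open Real Filter MeasureTheory Set
open scoped BigOperators Topology

/-- The basis direction `(e_j, 0)` in phase space. -/
def eX {d : ℕ} (j : Fin d) : Rd d × Rd d := (EuclideanSpace.single j (1:ℝ), 0)

/-- The basis direction `(0, e_j)` in phase space. -/
def eXi {d : ℕ} (j : Fin d) : Rd d × Rd d := (0, EuclideanSpace.single j (1:ℝ))

/-- Directional (partial) derivative of a phase-space function along `v`. -/
def pdir {d : ℕ} {F : Type*} [NormedAddCommGroup F] [NormedSpace ℝ F]
    (v : Rd d × Rd d) (a : Rd d × Rd d → F) (p : Rd d × Rd d) : F :=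
  fderiv ℝ a p v

/-- The anisotropic scaling `Λ_σ(λ)(x,ξ) = (λx, λ^σ ξ)`. -/
def scaleA (σ l : ℝ) {d : ℕ} (p : Rd d × Rd d) : Rd d × Rd d :=
  (l • p.1, l ^ σ • p.2)

/-- `y : ℝ → T*ℝ^d` solves Hamilton's equations for `a` on `[-T,T]` with initial
datum `p`, staying away from the origin. -/
def IsHamiltonSolution {d : ℕ} (a : Rd d × Rd d → ℝ) (T : ℝ)
    (p : Rd d × Rd d) (y : ℝ → Rd d × Rd d) : Prop :=
  y 0 = p ∧
  ∀ t ∈ Icc (-T) T, y t ≠ 0 ∧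
    ∀ j : Fin d,
      HasDerivWithinAt (fun s => (y s).1 j) (pdir (eXi j) a (y t)) (Icc (-T) T) t ∧
      HasDerivWithinAt (fun s => (y s).2 j) (-(pdir (eX j) a (y t))) (Icc (-T) T) t

/-! Differentiating `χ_t ∘ Λ_σ(λ) = Λ_σ(λ) ∘ χ_t` at `t = 0` and reading off Hamilton's equations
gives `∂_ξ a ∘ Λ_σ(λ) = λ ∂_ξ a` and `∂_x a ∘ Λ_σ(λ) = λ^σ ∂_x a`. Hence the homogeneity defect
`a ∘ Λ_σ(λ) - λ^{σ+1} a` has vanishing differential away from the origin, so it is constant on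
every open ray `{ε p : ε > 0}`; as `ε → 0` it tends to `0` because `a` does. -/

section Scaling

variable {d : ℕ} {σ l : ℝ}

def scaleCLM (σ l : ℝ) (d : ℕ) : (Rd d × Rd d) →L[ℝ] (Rd d × Rd d) :=
  (l • ContinuousLinearMap.id ℝ (Rd d)).prodMap (l ^ σ • ContinuousLinearMap.id ℝ (Rd d))

@[simp]
lemma scaleCLM_apply (p : Rd d × Rd d) : scaleCLM σ l d p = scaleA σ l p := rfl

lemma scaleA_ne_zero (hl : 0 < l) {p : Rd d × Rd d} (hp : p ≠ 0) : scaleA σ l p ≠ 0 := by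
  rintro h
  obtain ⟨h₁, h₂⟩ := Prod.ext_iff.mp h
  refine hp (Prod.ext ?_ ?_)
  · exact (smul_eq_zero.mp h₁).resolve_left hl.ne'
  · exact (smul_eq_zero.mp h₂).resolve_left (rpow_pos_of_pos hl σ).ne'

lemma tendsto_scaleA_nhdsNE_zero (hl : 0 < l) :
    Tendsto (scaleA σ l) (𝓝[≠] (0 : Rd d × Rd d)) (𝓝[≠] 0) := by
  refine tendsto_nhdsWithin_of_tendsto_nhds_of_eventually_within _ ?_ ?_
  · have h := (scaleCLM σ l d).continuous.tendsto 0
    rw [map_zero] at h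
    exact h.mono_left nhdsWithin_le_nhds
  · filter_upwards [self_mem_nhdsWithin] with p hp using scaleA_ne_zero hl hp

lemma scaleA_eX (j : Fin d) : scaleA σ l (eX j) = l • eX j := by
  simp [scaleA, eX]

lemma scaleA_eXi (j : Fin d) : scaleA σ l (eXi j) = l ^ σ • eXi j := by
  simp [scaleA, eXi]

end Scaling

lemma phaseSpace_clm_ext {d : ℕ} {F : Type*} [NormedAddCommGroup F] [NormedSpace ℝ F]
    {A B : (Rd d × Rd d) →L[ℝ] F} (hX : ∀ j, A (eX j) = B (eX j))
    (hXi : ∀ j, A (eXi j) = B (eXi j)) : A = B := by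
  let b := (EuclideanSpace.basisFun (Fin d) ℝ).toBasis
  refine ContinuousLinearMap.coe_injective ((b.prod b).ext ?_)
  rintro (j | j)
  · simpa [Module.Basis.prod_apply, b, eX] using hX j
  · simpa [Module.Basis.prod_apply, b, eXi] using hXi j

section Flow

variable {d : ℕ} {a : Rd d × Rd d → ℝ} {T σ l : ℝ} {p : Rd d × Rd d} {y z : ℝ → Rd d × Rd d}

lemma IsHamiltonSolution.hasDerivWithinAt_fst_zero (hy : IsHamiltonSolution a T p y)
    (hT : 0 ≤ T) (j : Fin d) :
    HasDerivWithinAt (fun s => (y s).1 j) (pdir (eXi j) a p) (Icc (-T) T) 0 := by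
  simpa [hy.1] using ((hy.2 0 ⟨by linarith, hT⟩).2 j).1

lemma IsHamiltonSolution.hasDerivWithinAt_snd_zero (hy : IsHamiltonSolution a T p y)
    (hT : 0 ≤ T) (j : Fin d) :
    HasDerivWithinAt (fun s => (y s).2 j) (-pdir (eX j) a p) (Icc (-T) T) 0 := by
  simpa [hy.1] using ((hy.2 0 ⟨by linarith, hT⟩).2 j).2

lemma IsHamiltonSolution.pdir_scaleA (hT : 0 < T) (hy : IsHamiltonSolution a T p y)
    (hz : IsHamiltonSolution a T (scaleA σ l p) z)
    (hyz : ∀ t ∈ Icc (-T) T, z t = scaleA σ l (y t)) (j : Fin d) :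
    pdir (eXi j) a (scaleA σ l p) = l * pdir (eXi j) a p ∧
      pdir (eX j) a (scaleA σ l p) = l ^ σ * pdir (eX j) a p := by
  have h0 : (0 : ℝ) ∈ Icc (-T) T := ⟨by linarith, hT.le⟩
  have hu : UniqueDiffWithinAt ℝ (Icc (-T) T) 0 := uniqueDiffOn_Icc (by linarith) 0 h0
  constructor
  · refine hu.eq_deriv _ (hz.hasDerivWithinAt_fst_zero hT.le j) ?_
    refine ((hy.hasDerivWithinAt_fst_zero hT.le j).const_mul l).congr (fun t ht => ?_) ?_
    · simp [hyz t ht, scaleA]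
    · simp [hyz 0 h0, scaleA]
  · have h := hu.eq_deriv _ (hz.hasDerivWithinAt_snd_zero hT.le j) <|
      ((hy.hasDerivWithinAt_snd_zero hT.le j).const_mul (l ^ σ)).congr (fun t ht => ?_) ?_
    · rwa [mul_neg, neg_inj] at h
    · simp [hyz t ht, scaleA]
    · simp [hyz 0 h0, scaleA]

end Flow

lemma fderiv_scaleA_comp_scaleCLM {d : ℕ} {a : Rd d × Rd d → ℝ} {σ l : ℝ} (hl : 0 < l)
    {q : Rd d × Rd d}
    (hpdir : ∀ j, pdir (eXi j) a (scaleA σ l q) = l * pdir (eXi j) a q ∧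
      pdir (eX j) a (scaleA σ l q) = l ^ σ * pdir (eX j) a q) :
    (fderiv ℝ a (scaleA σ l q)).comp (scaleCLM σ l d) = l ^ (σ + 1) • fderiv ℝ a q := by
  have hpow : l ^ (σ + 1) = l * l ^ σ := by rw [rpow_add hl, rpow_one, mul_comm]
  apply phaseSpace_clm_ext <;> intro j <;>
    simp only [ContinuousLinearMap.comp_apply, smul_apply, scaleCLM_apply,
      scaleA_eX, scaleA_eXi, map_smul, smul_eq_mul, ← pdir.eq_1, (hpdir j).1, (hpdir j).2, hpow] <;>
    ring

lemma eq_zero_of_hasFDerivAt_zero_of_tendsto_nhdsNE {E F : Type*} [NormedAddCommGroup E]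
    [NormedSpace ℝ E] [NormedAddCommGroup F] [NormedSpace ℝ F] {g : E → F}
    (hg : ∀ x, x ≠ 0 → HasFDerivAt g (0 : E →L[ℝ] F) x) (hlim : Tendsto g (𝓝[≠] 0) (𝓝 0))
    {p : E} (hp : p ≠ 0) : g p = 0 := by
  have hray : ∀ ε : ℝ, 0 < ε → g (ε • p) = g p := by
    intro ε hε
    have hseg : ∀ x ∈ segment ℝ (ε • p) p, x ≠ 0 := by
      rintro x ⟨u, v, hu, hv, huv, rfl⟩
      rw [smul_smul, ← add_smul]
      exact smul_ne_zero (by nlinarith [mul_nonneg hu hε.le]) hp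
    have h := (convex_segment (ε • p) p).norm_image_sub_le_of_norm_hasFDerivWithin_le (C := 0)
      (fun x hx => (hg x (hseg x hx)).hasFDerivWithinAt) (fun _ _ => by simp)
      (left_mem_segment ℝ _ _) (right_mem_segment ℝ _ _)
    simpa [sub_eq_zero, eq_comm] using h
  have hray_lim : Tendsto (fun ε : ℝ => ε • p) (𝓝[>] 0) (𝓝[≠] 0) := by
    refine tendsto_nhdsWithin_of_tendsto_nhds_of_eventually_within _ ?_ ?_
    · have h : Tendsto (fun ε : ℝ => ε • p) (𝓝 0) (𝓝 ((0 : ℝ) • p)) :=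
        (continuous_id.smul continuous_const).tendsto 0
      rw [zero_smul] at h
      exact h.mono_left nhdsWithin_le_nhds
    · filter_upwards [self_mem_nhdsWithin] with ε hε using smul_ne_zero (ne_of_gt hε) hp
  refine tendsto_nhds_unique (tendsto_const_nhds.congr' ?_) (hlim.comp hray_lim)
  filter_upwards [self_mem_nhdsWithin] with ε hε using (hray ε hε).symm

theorem statement15_general {d : ℕ} (σ T : ℝ) (hT : 0 < T)
    (a : Rd d × Rd d → ℝ)
    (ha : ContDiffOn ℝ (⊤ : ℕ∞) a {p : Rd d × Rd d | p ≠ 0})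
    (hlim : Tendsto a (𝓝[≠] (0 : Rd d × Rd d)) (𝓝 0))
    (χ : ℝ → (Rd d × Rd d) → Rd d × Rd d)
    (hflow : ∀ p : Rd d × Rd d, p ≠ 0 → IsHamiltonSolution a T p (fun t => χ t p))
    (hcomm : ∀ l : ℝ, 0 < l → ∀ p : Rd d × Rd d, p ≠ 0 → ∀ t ∈ Icc (-T) T,
      χ t (scaleA σ l p) = scaleA σ l (χ t p)) :
    ∀ p : Rd d × Rd d, p ≠ 0 → ∀ l : ℝ, 0 < l →
      a (scaleA σ l p) = l ^ (σ + 1) * a p := by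
  intro p hp l hl
  have hdiff : ∀ q : Rd d × Rd d, q ≠ 0 → HasFDerivAt a (fderiv ℝ a q) q := fun q hq =>
    ((ha.differentiableOn (by simp)).differentiableAt
      (isOpen_compl_singleton.mem_nhds hq)).hasFDerivAt
  have hdefect : ∀ q : Rd d × Rd d, q ≠ 0 →
      HasFDerivAt (fun q => a (scaleA σ l q) - l ^ (σ + 1) * a q)
        (0 : (Rd d × Rd d) →L[ℝ] ℝ) q := by
    intro q hq
    have hpdir := (hflow q hq).pdir_scaleA hT (hflow _ (scaleA_ne_zero hl hq)) (hcomm l hl q hq)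
    have h := ((hdiff _ (scaleA_ne_zero hl hq)).comp q (scaleCLM σ l d).hasFDerivAt).sub
      ((hdiff q hq).const_mul (l ^ (σ + 1)))
    rwa [fderiv_scaleA_comp_scaleCLM hl hpdir, sub_self] at h
  have hdefect_lim : Tendsto (fun q => a (scaleA σ l q) - l ^ (σ + 1) * a q)
      (𝓝[≠] 0) (𝓝 0) := by
    simpa using (hlim.comp (tendsto_scaleA_nhdsNE_zero hl)).sub (hlim.const_mul (l ^ (σ + 1)))
  exact sub_eq_zero.mp (eq_zero_of_hasFDerivAt_zero_of_tendsto_nhdsNE hdefect hdefect_lim hp)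

/-- If the Hamilton flow of a real-valued `a ∈ C^∞(ℝ^{2d} \ {0})` with
`a(x,ξ) → 0` as `(x,ξ) → 0` is defined on `[-T,T]` and commutes with the anisotropic
scaling `Λ_σ(λ)`, then `a` is anisotropically homogeneous of degree `σ+1`. -/
theorem statement15 {d : ℕ} (σ T : ℝ) (hσ : 0 < σ) (hT : 0 < T)
    (a : Rd d × Rd d → ℝ)
    (ha : ContDiffOn ℝ (⊤ : ℕ∞) a {p : Rd d × Rd d | p ≠ 0})
    (hlim : Tendsto a (𝓝[≠] (0 : Rd d × Rd d)) (𝓝 0))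
    (χ : ℝ → (Rd d × Rd d) → Rd d × Rd d)
    (hflow : ∀ p : Rd d × Rd d, p ≠ 0 → IsHamiltonSolution a T p (fun t => χ t p))
    (hcomm : ∀ l : ℝ, 0 < l → ∀ p : Rd d × Rd d, p ≠ 0 → ∀ t ∈ Icc (-T) T,
      χ t (scaleA σ l p) = scaleA σ l (χ t p)) :
    ∀ p : Rd d × Rd d, p ≠ 0 → ∀ l : ℝ, 0 < l →
      a (scaleA σ l p) = l ^ (σ + 1) * a p :=
  statement15_general σ T hT a ha hlim χ hflow hcomm
end
end
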